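/- Let K and L be finitely generated groups and let G be a finite group acting on a finite set X. For a group homomorphism φ : K → G, let ⟨φ⟩ denote its image, C_G(φ) the centralizer of ⟨φ⟩ in G, and X^{⟨φ⟩} the set of points of X fixed by every element of ⟨φ⟩, which is a C_G(φ)-set. Then the quantity χ_L(X^{⟨φ⟩}; C_G(φ)) depends only on the conjugacy class [φ] of φ, and χ_{K×L}(X;G) = Σ_{[φ] ∈ Hom(K,G)/G} χ_L(X^{⟨φ⟩}; C_G(φ)), where the sum is over the orbits of the conjugation action of G on Hom(K,G). -/

import Mathlib

/-- The generalized orbifold Euler characteristic `χ_K(X;G)` associated to a group `K`: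
`(1/|G|) Σ_{φ ∈ Hom(K×ℤ,G)} |X^{⟨φ⟩}|`. -/
noncomputable def chiGen (K : Type*) [Group K] (G : Type*) [Group G] (X : Type*)
    [MulAction G X] : ℚ :=
  (Nat.card G : ℚ)⁻¹ *
    ∑ᶠ φ : (K × Multiplicative ℤ) →* G,
      (Nat.card {x : X // ∀ k, φ k • x = x} : ℚ)

/-- `G` acts on the set of group homomorphisms `K →* G` by conjugation. -/
instance homConjAction (K G : Type*) [Group K] [Group G] : MulAction G (K →* G) where
  smul g φ := ((MulAut.conj g).toMonoidHom.comp φ)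
  one_smul φ := by
    ext x
    show (MulAut.conj 1) (φ x) = φ x
    simp
  mul_smul g h φ := by
    ext x
    show (MulAut.conj (g * h)) (φ x) = (MulAut.conj g) ((MulAut.conj h) (φ x))
    simp

/-- `X^{⟨φ⟩}`: the set of points of `X` fixed by every element of the image of `φ`. -/
def homFixedPoints {K G : Type*} [Group K] [Group G] (φ : K →* G) (X : Type*)
    [MulAction G X] : Type _ :=
  {x : X // ∀ k, φ k • x = x}

/-- The centralizer `C_G(φ)` of the image of `φ` acts on `X^{⟨φ⟩}`. -/
instance centralizerFixedAction {K G : Type*} [Group K] [Group G] (φ : K →* G) (X : Type*)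
    [MulAction G X] : MulAction ↥(Subgroup.centralizer (Set.range ⇑φ)) (homFixedPoints φ X) where
  smul c x := ⟨(c : G) • x.1, fun k => by
    have hc : φ k * (c : G) = (c : G) * φ k :=
      Subgroup.mem_centralizer_iff.mp c.2 (φ k) ⟨k, rfl⟩
    rw [← mul_smul, hc, mul_smul, x.2 k]⟩
  one_smul x := Subtype.ext <| by
    show ((1 : ↥(Subgroup.centralizer (Set.range ⇑φ))) : G) • x.1 = x.1
    simp
  mul_smul a b x := Subtype.ext <| by
    show ((a * b : ↥(Subgroup.centralizer (Set.range ⇑φ))) : G) • x.1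
        = (a : G) • (b : G) • x.1
    simp [mul_smul]

/-! A homomorphism `ψ : (K × L) × ℤ →* G` amounts to a homomorphism `φ : K →* G` together with a
homomorphism `L × ℤ →* C_G(φ)`, and the points fixed by `ψ` are the points of `X^{⟨φ⟩}` fixed by
the latter. This splits the sum defining `χ_{K×L}(X;G)` as `Σ_φ |C_G(φ)| χ_L(X^{⟨φ⟩};C_G(φ))`.
Conjugation by `g` identifies `C_G(φ)` acting on `X^{⟨φ⟩}` with `C_G(g • φ)` acting on
`X^{⟨g • φ⟩}`, so the summand is constant on orbits; since `C_G(φ)` is the stabilizer of `φ`,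
orbit–stabilizer turns the sum over each orbit into `|G|` times a single term. -/

open MulAction Subgroup

instance MonoidHom.finite_of_fg (M N : Type*) [Monoid M] [Monoid.FG M] [Monoid N] [Finite N] :
    Finite (M →* N) := by
  obtain ⟨S, hS, hSfin⟩ := Monoid.fg_iff.mp ‹Monoid.FG M›
  have : Finite S := hSfin
  refine Finite.of_injective (fun (f : M →* N) (s : S) => f s) fun f g hfg => ?_
  exact MonoidHom.eq_of_eqOn_denseM hS fun x hx => congrFun hfg ⟨x, hx⟩

theorem chiGen_congr (L : Type*) [Group L] {C C' Y Y' : Type*} [Group C] [Group C']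
    [MulAction C Y] [MulAction C' Y'] (e : C ≃* C') (f : Y ≃ Y')
    (hf : ∀ (c : C) (y : Y), f (c • y) = e c • f y) :
    chiGen L C Y = chiGen L C' Y' := by
  unfold chiGen
  rw [Nat.card_congr e.toEquiv, ← finsum_comp_equiv (MulEquiv.monoidHomCongrRightEquiv e)]
  congr 1
  refine finsum_congr fun ρ => congrArg _ (Nat.card_congr (f.subtypeEquiv fun y => ?_))
  simp only [MulEquiv.monoidHomCongrRightEquiv_apply, MonoidHom.coe_comp,
    MulEquiv.coe_toMonoidHom, Function.comp_apply, ← hf, f.apply_eq_iff_eq]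

theorem card_mul_chiGen (L : Type*) [Group L] (C Y : Type*) [Group C] [Finite C]
    [MulAction C Y] :
    (Nat.card C : ℚ) * chiGen L C Y =
      ∑ᶠ ρ : (L × Multiplicative ℤ) →* C, (Nat.card {y : Y // ∀ b, ρ b • y = y} : ℚ) :=
  mul_inv_cancel_left₀ (Nat.cast_ne_zero.2 Nat.card_pos.ne') _

section Conjugation

variable {K G : Type*} [Group K] [Group G]

theorem homConjAction_smul_apply (g : G) (φ : K →* G) (k : K) :
    (g • φ) k = g * φ k * g⁻¹ := rfl

theorem stabilizer_hom_eq_centralizer (φ : K →* G) :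
    stabilizer G φ = centralizer (Set.range φ) := by
  ext g
  simp only [mem_stabilizer_iff, mem_centralizer_iff, Set.forall_mem_range, MonoidHom.ext_iff,
    homConjAction_smul_apply, mul_inv_eq_iff_eq_mul]
  exact forall_congr' fun k => eq_comm

theorem centralizer_range_smul (g : G) (φ : K →* G) :
    centralizer (Set.range (g • φ)) =
      (centralizer (Set.range φ)).map (MulAut.conj g).toMonoidHom := by
  rw [← stabilizer_hom_eq_centralizer, ← stabilizer_hom_eq_centralizer,
    stabilizer_smul_eq_stabilizer_map_conj]

def centralizerConj (g : G) (φ : K →* G) :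
    centralizer (Set.range φ) ≃* centralizer (Set.range (g • φ)) :=
  ((MulAut.conj g).subgroupMap _).trans (MulEquiv.subgroupCongr (centralizer_range_smul g φ).symm)

def homFixedPointsSmul (g : G) (φ : K →* G) (X : Type*) [MulAction G X] :
    homFixedPoints φ X ≃ homFixedPoints (g • φ) X :=
  (MulAction.toPerm g).subtypeEquiv fun x => by
    simp [homConjAction_smul_apply, mul_smul]

theorem chiGen_centralizer_smul (L : Type*) [Group L] (g : G) (φ : K →* G) (X : Type*)
    [MulAction G X] :
    chiGen L (centralizer (Set.range (g • φ))) (homFixedPoints (g • φ) X) =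
      chiGen L (centralizer (Set.range φ)) (homFixedPoints φ X) := by
  refine (chiGen_congr L (centralizerConj g φ) (homFixedPointsSmul g φ X) fun c x => ?_).symm
  apply Subtype.ext
  show g • (c : G) • x.1 = (MulAut.conj g c) • g • x.1
  simp [mul_smul]

end Conjugation

theorem finsum_card_stabilizer_mul {R G Y : Type*} [CommSemiring R] [Group G] [Finite G]
    [MulAction G Y] [Finite Y] (F : Y → R) (hF : ∀ (g : G) (y : Y), F (g • y) = F y) :
    ∑ᶠ y, (Nat.card (stabilizer G y) : R) * F y =
      Nat.card G * ∑ᶠ q : orbitRel.Quotient G Y, F q.out := by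
  classical
  have := Fintype.ofFinite Y
  have := Fintype.ofFinite (orbitRel.Quotient G Y)
  have orbit_sum (z : Y) :
      ∑ y : orbit G z, (Nat.card (stabilizer G (y : Y)) : R) * F y = Nat.card G * F z := by
    have hconst : ∀ y : orbit G z, (Nat.card (stabilizer G (y : Y)) : R) * F y =
        Nat.card (stabilizer G z) * F z := by
      rintro ⟨_, g, rfl⟩
      rw [hF, Nat.card_congr (stabilizerEquivStabilizer rfl).toEquiv.symm]
    rw [Fintype.sum_congr _ _ hconst, Finset.sum_const, Finset.card_univ, nsmul_eq_mul,
      ← mul_assoc, Fintype.card_eq_nat_card, ← Nat.cast_mul, ← Nat.card_prod,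
      Nat.card_congr (orbitProdStabilizerEquivGroup G z)]
  rw [finsum_eq_sum_of_fintype, finsum_eq_sum_of_fintype, Finset.mul_sum,
    ← Fintype.sum_equiv (selfEquivSigmaOrbits G Y).symm _ _ fun _ => rfl, Fintype.sum_sigma]
  exact Fintype.sum_congr _ _ fun q => orbit_sum q.out

section Product

variable {K M G : Type*} [Monoid K] [Monoid M] [Group G]

theorem sigma_centralizer_ext {p q : Σ φ : K →* G, M →* centralizer (Set.range φ)}
    (h₁ : p.1 = q.1) (h₂ : ∀ m, (p.2 m : G) = q.2 m) : p = q := by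
  obtain ⟨φ, ρ⟩ := p
  obtain ⟨ψ, σ⟩ := q
  obtain rfl : φ = ψ := h₁
  exact congrArg _ (MonoidHom.ext fun m => Subtype.ext (h₂ m))

def MonoidHom.prodEquivSigmaCentralizer :
    (K × M →* G) ≃ Σ φ : K →* G, M →* centralizer (Set.range φ) where
  toFun ψ := ⟨ψ.comp (.inl K M), (ψ.comp (.inr K M)).codRestrict _ fun m => by
    rw [mem_centralizer_iff]
    rintro _ ⟨k, rfl⟩
    simp only [MonoidHom.comp_apply, MonoidHom.inl_apply, MonoidHom.inr_apply, ← map_mul,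
      Prod.mk_mul_mk, one_mul, mul_one]⟩
  invFun p := p.1.noncommCoprod ((centralizer _).subtype.comp p.2) fun k m =>
    mem_centralizer_iff.1 (p.2 m).2 (p.1 k) ⟨k, rfl⟩
  left_inv ψ := by
    ext ⟨k, m⟩
    simp [MonoidHom.noncommCoprod_apply, ← map_mul]
  right_inv p := sigma_centralizer_ext (MonoidHom.noncommCoprod_comp_inl _ _ _) fun m => by
    show p.1 1 * (p.2 m : G) = p.2 m
    rw [map_one, one_mul]

theorem MonoidHom.prod_forall_smul_eq_iff {H X : Type*} [Monoid H] [MulAction H X]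
    (ψ : K × M →* H) (x : X) :
    (∀ a, ψ a • x = x) ↔ (∀ k, ψ (k, 1) • x = x) ∧ ∀ m, ψ (1, m) • x = x := by
  refine ⟨fun h => ⟨fun k => h _, fun m => h _⟩, fun ⟨hK, hM⟩ ⟨k, m⟩ => ?_⟩
  rw [← mul_one k, ← one_mul m, ← Prod.mk_mul_mk, map_mul, mul_smul, hM, hK]

end Product

section ProductFixedPoints

variable {K M G : Type*} [Group K] [Monoid M] [Group G]

theorem card_fixedPoints_prod {X : Type*} [MulAction G X] (ψ : K × M →* G) :
    Nat.card {x : X // ∀ a, ψ a • x = x} =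
      Nat.card {y : homFixedPoints (MonoidHom.prodEquivSigmaCentralizer ψ).1 X //
        ∀ m, (MonoidHom.prodEquivSigmaCentralizer ψ).2 m • y = y} :=
  Nat.card_congr
    { toFun x := ⟨⟨x.1, ((ψ.prod_forall_smul_eq_iff x.1).1 x.2).1⟩,
        fun m => Subtype.ext (((ψ.prod_forall_smul_eq_iff x.1).1 x.2).2 m)⟩
      invFun y := ⟨y.1.1, (ψ.prod_forall_smul_eq_iff _).2
        ⟨y.1.2, fun m => congrArg Subtype.val (y.2 m)⟩⟩ }

theorem finsum_card_fixedPoints_prod [Monoid.FG K] [Monoid.FG M] [Finite G] (X : Type*)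
    [MulAction G X] :
    ∑ᶠ ψ : K × M →* G, (Nat.card {x : X // ∀ a, ψ a • x = x} : ℚ) =
      ∑ᶠ φ : K →* G, ∑ᶠ ρ : M →* centralizer (Set.range φ),
        (Nat.card {y : homFixedPoints φ X // ∀ m, ρ m • y = y} : ℚ) := by
  classical
  have := Fintype.ofFinite (K × M →* G)
  have := Fintype.ofFinite (K →* G)
  have := fun φ : K →* G => Fintype.ofFinite (M →* centralizer (Set.range φ))
  simp only [finsum_eq_sum_of_fintype]
  rw [Fintype.sum_equiv MonoidHom.prodEquivSigmaCentralizer _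
    (fun p => (Nat.card {y : homFixedPoints p.1 X // ∀ m, p.2 m • y = y} : ℚ))
    fun ψ => by rw [card_fixedPoints_prod], Fintype.sum_sigma]

end ProductFixedPoints

theorem chiGen_prod_eq_sum_card_centralizer_mul {K L G : Type*} [Group K] [Group.FG K] [Group L]
    [Group.FG L] [Group G] [Finite G] (X : Type*) [MulAction G X] :
    chiGen (K × L) G X = (Nat.card G : ℚ)⁻¹ * ∑ᶠ φ : K →* G,
      Nat.card (centralizer (Set.range φ)) * chiGen L (centralizer (Set.range φ))
        (homFixedPoints φ X) := by
  simp only [card_mul_chiGen, ← finsum_card_fixedPoints_prod]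
  rw [chiGen, ← finsum_comp_equiv (MulEquiv.monoidHomCongrLeftEquiv (N := G)
    (MulEquiv.prodAssoc : (K × L) × Multiplicative ℤ ≃* _))]
  refine congrArg _ (finsum_congr fun ψ => congrArg _ (Nat.card_congr
    (Equiv.subtypeEquivRight fun x => MulEquiv.prodAssoc.symm.surjective.forall)))

theorem chiGen_prod_group_eq_sum_centralizer_general (K L : Type) [Group K] [Group.FG K]
    [Group L] [Group.FG L] (G X : Type) [Group G] [Finite G] [MulAction G X] :
    (∀ (φ : K →* G) (g : G),
      chiGen L ↥(Subgroup.centralizer (Set.range ⇑(g • φ))) (homFixedPoints (g • φ) X) =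
        chiGen L ↥(Subgroup.centralizer (Set.range ⇑φ)) (homFixedPoints φ X)) ∧
      chiGen (K × L) G X =
        ∑ᶠ q : Quotient (MulAction.orbitRel G (K →* G)),
          chiGen L ↥(Subgroup.centralizer (Set.range ⇑(Quotient.out q)))
            (homFixedPoints (Quotient.out q) X) := by
  have conj_invariant (φ : K →* G) (g : G) := chiGen_centralizer_smul L g φ X
  refine ⟨conj_invariant, ?_⟩
  have orbit_sum := finsum_card_stabilizer_mul (R := ℚ)
    (fun φ : K →* G => chiGen L (centralizer (Set.range φ)) (homFixedPoints φ X))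
    fun g φ => conj_invariant φ g
  simp only [stabilizer_hom_eq_centralizer] at orbit_sum
  rw [chiGen_prod_eq_sum_card_centralizer_mul, orbit_sum,
    inv_mul_cancel_left₀ (Nat.cast_ne_zero.2 Nat.card_pos.ne')]

/-- **Proposition 2-1** (second part, formula (1-4)/(2-4)): `χ_L(X^{⟨φ⟩};C_G(φ))` depends only
on the conjugacy class of `φ`, and
`χ_{K×L}(X;G) = Σ_{[φ] ∈ Hom(K,G)/G} χ_L(X^{⟨φ⟩};C_G(φ))`. -/
theorem chiGen_prod_group_eq_sum_centralizer (K L : Type) [Group K] [Group.FG K]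
    [Group L] [Group.FG L] (G X : Type) [Group G] [Finite G] [MulAction G X] [Finite X] :
    (∀ (φ : K →* G) (g : G),
      chiGen L ↥(Subgroup.centralizer (Set.range ⇑(g • φ))) (homFixedPoints (g • φ) X) =
        chiGen L ↥(Subgroup.centralizer (Set.range ⇑φ)) (homFixedPoints φ X)) ∧
      chiGen (K × L) G X =
        ∑ᶠ q : Quotient (MulAction.orbitRel G (K →* G)),
          chiGen L ↥(Subgroup.centralizer (Set.range ⇑(Quotient.out q)))
            (homFixedPoints (Quotient.out q) X) :=
  chiGen_prod_group_eq_sum_centralizer_general K L G X
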